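/- Suppose D follows Data Model 1 and Assumption 3 holds: dim(Ṡ_i ∩ P_i) = 0 for every i, where P_i = ⊕_{k≠i} S_k with orthonormal basis matrix P_i. Let U⃗_i be an orthonormal basis for the column space of (I − P_iP_iᵀ)U_i. Fix a column d_i = S·α_i + U̇_{k_i}·β_i of D and suppose U⃗_{k_i}ᵀ U̇_{k_i} β_i ≠ 0; define d⃗_i = U⃗_{k_i}U⃗_{k_i}ᵀ d_i / ‖U⃗_{k_i}ᵀ U̇_{k_i} β_i‖₂². Then: (a) d⃗_iᵀ d_i = 1; (b) D_jᵀ d⃗_i = 0 for every j ≠ k_i; and (c) for every p ≥ 1, ‖D_{k_i}ᵀ d⃗_i‖_p^p ≤ Δ̇_max / ‖U⃗_{k_i}ᵀ U̇_{k_i} β_i‖₂^p. -/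

import Mathlib

open Matrix Finset MeasureTheory ProbabilityTheory

noncomputable section

namespace Paper

instance {m n α : Type*} [MeasurableSpace α] : MeasurableSpace (Matrix m n α) :=
  MeasurableSpace.pi

/-- Euclidean (`ℓ₂`) norm of a vector. -/
def enorm {ι : Type*} [Fintype ι] (v : ι → ℝ) : ℝ := Real.sqrt (∑ i, v i ^ 2)

/-- `ℓ_p` norm of a vector. -/
def pnorm {ι : Type*} [Fintype ι] (p : ℝ) (v : ι → ℝ) : ℝ := (∑ i, |v i| ^ p) ^ (1 / p)

/-- Spectral norm (largest singular value) of a real matrix. -/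
def spec {a b : Type*} [Fintype a] [Fintype b] (M : Matrix a b ℝ) : ℝ :=
  ⨆ v : { v : b → ℝ // enorm v = 1 }, enorm (M.mulVec v.1)

/-- Smallest singular value of a real matrix. -/
def smin {a b : Type*} [Fintype a] [Fintype b] (M : Matrix a b ℝ) : ℝ :=
  ⨅ v : { v : b → ℝ // enorm v = 1 }, enorm (M.mulVec v.1)

/-- Column space (span of the columns) of a matrix. -/
def colSpan {a b : Type*} (M : Matrix a b ℝ) : Submodule ℝ (a → ℝ) :=
  Submodule.span ℝ (Set.range Mᵀ)

/-- Requirement 1 with parameters `κ` and `p`; the columns of the data matrix are indexed by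
`Fin m × Fin n`, the first coordinate being the cluster index. -/
def Req1 {m n : ℕ} (A : Matrix (Fin m × Fin n) (Fin m × Fin n) ℝ) (κ p : ℝ) : Prop :=
  ∀ i : Fin m × Fin n,
    κ / ((m : ℝ) - 1) * ∑ j ∈ univ.filter (fun j : Fin m × Fin n => j.1 ≠ i.1), |A j i| ^ p
      < ∑ j ∈ univ.filter (fun j : Fin m × Fin n => j.1 = i.1), |A j i| ^ p

/-- Feasibility for the direction-search problem: `cᵢᵀ dᵢ = 1` for every column. -/
def Feasible {a ι : Type*} [Fintype a] [Fintype ι] (D C : Matrix a ι ℝ) : Prop :=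
  ∀ i, dotProduct (Cᵀ i) (Dᵀ i) = 1

/-- Optimal point of `min_C ∑ᵢ ‖Dᵀ cᵢ‖_p  s.t.  cᵢᵀ dᵢ = 1`. -/
def IsOptimal {a ι : Type*} [Fintype a] [Fintype ι] (p : ℝ) (D C : Matrix a ι ℝ) : Prop :=
  Feasible D C ∧ ∀ C' : Matrix a ι ℝ, Feasible D C' →
    ∑ i, pnorm p (Dᵀ.mulVec (Cᵀ i)) ≤ ∑ i, pnorm p (Dᵀ.mulVec (C'ᵀ i))

/-- Optimal point of `min_C ∑ᵢ ‖Dᵀ cᵢ‖₂  s.t.  cᵢᵀ dᵢ = 1`. -/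
def IsOptimal2 {a ι : Type*} [Fintype a] [Fintype ι] (D C : Matrix a ι ℝ) : Prop :=
  Feasible D C ∧ ∀ C' : Matrix a ι ℝ, Feasible D C' →
    ∑ i, enorm (Dᵀ.mulVec (Cᵀ i)) ≤ ∑ i, enorm (Dᵀ.mulVec (C'ᵀ i))

/-- The adjacency matrix `A = |Dᵀ C|`. -/
def adjacency {a ι : Type*} [Fintype a] [Fintype ι] (D C : Matrix a ι ℝ) : Matrix ι ι ℝ :=
  Matrix.of fun j i => |(Dᵀ * C) j i|

/-- `Δ_min`: the permeance statistic of the clusters. -/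
def Dmin {M₁ m n s rs : ℕ} (D : Matrix (Fin M₁) (Fin m × Fin n) ℝ)
    (Smat : Matrix (Fin M₁) (Fin s) ℝ) (Ud : Fin m → Matrix (Fin M₁) (Fin rs) ℝ)
    (p : ℝ) : ℝ :=
  ⨅ j : Fin m, ⨅ u : { u : Fin M₁ → ℝ // u ∈ colSpan Smat ⊔ colSpan (Ud j) ∧ enorm u = 1 },
    ∑ t : Fin n, |dotProduct u.1 (Dᵀ (j, t))| ^ p

/-- `Δ̇_max`. -/
def Ddotmax {M₁ m n rs : ℕ} (D : Matrix (Fin M₁) (Fin m × Fin n) ℝ)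
    (Ud : Fin m → Matrix (Fin M₁) (Fin rs) ℝ) (p : ℝ) : ℝ :=
  ⨆ j : Fin m, ⨆ u : { u : Fin rs → ℝ // enorm u = 1 },
    ∑ t : Fin n, |dotProduct u.1 ((Ud j)ᵀ.mulVec (Dᵀ (j, t)))| ^ p

/-- `Δ̄_max`. -/
def Dbarmax {M₁ m n s : ℕ} (D : Matrix (Fin M₁) (Fin m × Fin n) ℝ)
    (Smat : Matrix (Fin M₁) (Fin s) ℝ) (p : ℝ) : ℝ :=
  ⨆ j : Fin m, ⨆ u : { u : Fin s → ℝ // enorm u = 1 },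
    ∑ t : Fin n, |dotProduct u.1 (Smatᵀ.mulVec (Dᵀ (j, t)))| ^ p

/-- `φ = max_{j ≠ t} ‖U̇ₜᵀ U̇ⱼ‖`. -/
def phi {M₁ m rs : ℕ} (Ud : Fin m → Matrix (Fin M₁) (Fin rs) ℝ) : ℝ :=
  ⨆ j : Fin m, ⨆ t : Fin m, if j ≠ t then spec ((Ud t)ᵀ * Ud j) else 0

/-- `z_{δ,x}`. -/
def zd (m n : ℕ) (δ x : ℝ) : ℝ :=
  1 + 2 * Real.sqrt (1 / x * Real.log (2 * n * m / δ)) + 2 / x * Real.log (2 * n * m / δ)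

/-- `η_{δ,x}`. -/
def etad (m n : ℕ) (δ x : ℝ) : ℝ :=
  max (4 * zd m n δ x / 3 * Real.log (2 * x * m / δ))
    (Real.sqrt (4 * n * (x + 3) / x ^ 2 * Real.log (2 * x * m / δ)))

/-- `σ_l(x/y, δ)`. -/
def sigl (M₂ : ℕ) (δ x y : ℝ) : ℝ :=
  (x - 2 * Real.sqrt (x * Real.log (2 * M₂ / δ))) /
    (y + 2 * Real.sqrt ((y - x) * Real.log (2 * M₂ / δ)) + 2 * Real.log (2 * M₂ / δ)
      - 2 * Real.sqrt (x * Real.log (2 * M₂ / δ)))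

/-- `σ_u(x/y, δ)`. -/
def sigu (M₂ : ℕ) (δ x y : ℝ) : ℝ :=
  (x + 2 * Real.sqrt (x * Real.log (2 * M₂ / δ)) + 2 * Real.log (2 * M₂ / δ)) /
    (y + 2 * Real.sqrt (x * Real.log (2 * M₂ / δ)) + 2 * Real.log (2 * M₂ / δ)
      - 2 * Real.sqrt ((y - x) * Real.log (2 * M₂ / δ)))

/-- `c_δ` of Theorems 3 and 8. -/
def cdel (M₁ m r s : ℕ) (δ : ℝ) : ℝ :=
  3 * max 1 (max (Real.sqrt (8 * M₁ * Real.pi / (((M₁ : ℝ) - 1) * ((r : ℝ) - s))))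
    (Real.sqrt (16 * M₁ * Real.log (m * r / δ) / (((M₁ : ℝ) - 1) * ((r : ℝ) - s)))))

/-!
`U⃗_{kᵢ}` is orthogonal to `P_{kᵢ}`, which contains the common subspace `S` and every other
subspace `S_j`. Hence `d⃗ᵢ` annihilates all columns outside cluster `kᵢ`, and on a column
`d = S α + U̇ β` of cluster `kᵢ` only the innovative part survives:
`dᵀ d⃗ᵢ = ⟨U̇ᵀ d⃗ᵢ, U̇ᵀ d⟩`. Since `‖U̇ᵀ d⃗ᵢ‖ ≤ ‖d⃗ᵢ‖ = 1 / ‖U⃗ᵀ U̇ βᵢ‖`, rescaling `U̇ᵀ d⃗ᵢ` to a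
unit vector bounds the `p`-th power sum by `Δ̇_max / ‖U⃗ᵀ U̇ βᵢ‖ᵖ`.
-/

section Vectors

variable {ι : Type*} [Fintype ι]

lemma enorm_eq_norm_toLp (v : ι → ℝ) : enorm v = ‖WithLp.toLp 2 v‖ := by
  simp [enorm, EuclideanSpace.norm_eq]

lemma enorm_nonneg (v : ι → ℝ) : 0 ≤ enorm v :=
  Real.sqrt_nonneg _

lemma enorm_pos {v : ι → ℝ} (hv : v ≠ 0) : 0 < enorm v := by
  rw [enorm_eq_norm_toLp]
  exact norm_pos_iff.2 (by simpa using hv)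

lemma enorm_smul (c : ℝ) (v : ι → ℝ) : enorm (c • v) = |c| * enorm v := by
  simp [enorm_eq_norm_toLp, WithLp.toLp_smul, norm_smul]

lemma enorm_sq (v : ι → ℝ) : enorm v ^ 2 = v ⬝ᵥ v := by
  rw [enorm_eq_norm_toLp, ← real_inner_self_eq_norm_sq, EuclideanSpace.inner_eq_star_dotProduct]
  simp

lemma abs_dotProduct_le (u v : ι → ℝ) : |u ⬝ᵥ v| ≤ enorm u * enorm v := by
  simpa [enorm_eq_norm_toLp, EuclideanSpace.inner_eq_star_dotProduct, dotProduct_comm] using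
    abs_real_inner_le_norm (WithLp.toLp 2 u) (WithLp.toLp 2 v)

lemma sum_abs_dotProduct_rpow_le {τ : Type*} [Fintype τ] {p B : ℝ} (hp : 0 < p)
    {y : τ → ι → ℝ} (hB : ∀ u, enorm u = 1 → ∑ t, |u ⬝ᵥ y t| ^ p ≤ B) (w : ι → ℝ) :
    ∑ t, |w ⬝ᵥ y t| ^ p ≤ enorm w ^ p * B := by
  rcases eq_or_ne w 0 with rfl | hw
  · simp [enorm, Real.zero_rpow hp.ne']
  have hpos := enorm_pos hw
  set u := (enorm w)⁻¹ • w
  have hu : enorm u = 1 := by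
    rw [enorm_smul, abs_inv, abs_of_pos hpos, inv_mul_cancel₀ hpos.ne']
  have hwu : w = enorm w • u := by
    rw [smul_smul, mul_inv_cancel₀ hpos.ne', one_smul]
  calc ∑ t, |w ⬝ᵥ y t| ^ p = enorm w ^ p * ∑ t, |u ⬝ᵥ y t| ^ p := by
        conv_lhs => rw [hwu]
        simp only [smul_dotProduct, smul_eq_mul, abs_mul, abs_of_pos hpos,
          Real.mul_rpow hpos.le (abs_nonneg _), Finset.mul_sum]
    _ ≤ enorm w ^ p * B := mul_le_mul_of_nonneg_left (hB u hu) (by positivity)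

end Vectors

section Matrices

variable {a b : Type*} [Fintype a] [Fintype b] [DecidableEq b]

lemma enorm_mulVec_of_transpose_mul_self {M : Matrix a b ℝ} (hM : Mᵀ * M = 1) (v : b → ℝ) :
    enorm (M *ᵥ v) = enorm v := by
  refine (pow_left_inj₀ (enorm_nonneg _) (enorm_nonneg _) two_ne_zero).1 ?_
  rw [enorm_sq, enorm_sq, dotProduct_mulVec, ← mulVec_transpose, mulVec_mulVec, hM, one_mulVec]

lemma enorm_transpose_mulVec_le {M : Matrix a b ℝ} (hM : Mᵀ * M = 1) (x : a → ℝ) :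
    enorm (Mᵀ *ᵥ x) ≤ enorm x := by
  have h : enorm (Mᵀ *ᵥ x) ^ 2 ≤ enorm x * enorm (Mᵀ *ᵥ x) :=
    calc enorm (Mᵀ *ᵥ x) ^ 2 = x ⬝ᵥ M *ᵥ (Mᵀ *ᵥ x) := by
          rw [enorm_sq, dotProduct_mulVec x, ← mulVec_transpose]
      _ ≤ enorm x * enorm (M *ᵥ (Mᵀ *ᵥ x)) := (le_abs_self _).trans (abs_dotProduct_le _ _)
      _ = enorm x * enorm (Mᵀ *ᵥ x) := by rw [enorm_mulVec_of_transpose_mul_self hM]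
  nlinarith [enorm_nonneg x, enorm_nonneg (Mᵀ *ᵥ x)]

omit [Fintype a] [DecidableEq b] in
lemma mem_colSpan_iff {M : Matrix a b ℝ} {x : a → ℝ} : x ∈ colSpan M ↔ ∃ z, M *ᵥ z = x := by
  change x ∈ Submodule.span ℝ (Set.range M.col) ↔ _
  simp [← range_mulVecLin]

omit [Fintype a] [DecidableEq b] in
lemma mulVec_mem_colSpan (M : Matrix a b ℝ) (z : b → ℝ) : M *ᵥ z ∈ colSpan M :=
  mem_colSpan_iff.2 ⟨z, rfl⟩

lemma transpose_mulVec_eq_zero_of_colSpan_le_map [DecidableEq a] {c : Type*} {V : Matrix a c ℝ}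
    {P : Matrix a b ℝ} (hP : Pᵀ * P = 1) {W : Submodule ℝ (a → ℝ)}
    (hV : colSpan V ≤ W.map (1 - P * Pᵀ).mulVecLin) {x : a → ℝ} (hx : x ∈ colSpan P) :
    Vᵀ *ᵥ x = 0 := by
  obtain ⟨z, rfl⟩ := mem_colSpan_iff.1 hx
  have hPker : Pᵀ * (1 - P * Pᵀ) = 0 := by
    rw [Matrix.mul_sub, Matrix.mul_one, ← Matrix.mul_assoc, hP, Matrix.one_mul, sub_self]
  funext j
  obtain ⟨w, -, hw⟩ := hV (Submodule.subset_span ⟨j, rfl⟩)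
  change Vᵀ j ⬝ᵥ P *ᵥ z = 0
  rw [← hw, mulVecLin_apply, dotProduct_mulVec, ← mulVec_transpose, mulVec_mulVec, hPker,
    zero_mulVec, zero_dotProduct]

end Matrices

lemma Ddotmax_nonneg {M₁ m n rs : ℕ} (D : Matrix (Fin M₁) (Fin m × Fin n) ℝ)
    (Ud : Fin m → Matrix (Fin M₁) (Fin rs) ℝ) (p : ℝ) : 0 ≤ Ddotmax D Ud p :=
  Real.iSup_nonneg fun _ => Real.iSup_nonneg fun _ =>
    Finset.sum_nonneg fun _ _ => Real.rpow_nonneg (abs_nonneg _) _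

lemma le_Ddotmax {M₁ m n rs : ℕ} (D : Matrix (Fin M₁) (Fin m × Fin n) ℝ)
    (Ud : Fin m → Matrix (Fin M₁) (Fin rs) ℝ) {p : ℝ} (hp : 0 ≤ p) (j : Fin m)
    {u : Fin rs → ℝ} (hu : enorm u = 1) :
    ∑ t, |u ⬝ᵥ (Ud j)ᵀ *ᵥ Dᵀ (j, t)| ^ p ≤ Ddotmax D Ud p := by
  have hbdd : BddAbove (Set.range fun u : {u : Fin rs → ℝ // enorm u = 1} =>
      ∑ t, |u.1 ⬝ᵥ (Ud j)ᵀ *ᵥ Dᵀ (j, t)| ^ p) := by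
    refine ⟨∑ t, enorm ((Ud j)ᵀ *ᵥ Dᵀ (j, t)) ^ p, ?_⟩
    rintro _ ⟨u, rfl⟩
    refine Finset.sum_le_sum fun t _ => Real.rpow_le_rpow (abs_nonneg _) ?_ hp
    simpa [u.2] using abs_dotProduct_le u.1 ((Ud j)ᵀ *ᵥ Dᵀ (j, t))
  exact (le_ciSup hbdd ⟨u, hu⟩).trans
    (le_ciSup (f := fun j => ⨆ u : {u : Fin rs → ℝ // enorm u = 1},
      ∑ t, |u.1 ⬝ᵥ (Ud j)ᵀ *ᵥ Dᵀ (j, t)| ^ p) (Set.finite_range _).bddAbove j)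

lemma sum_abs_dotProduct_rpow_le_Ddotmax {M₁ m n s rs : ℕ}
    {D : Matrix (Fin M₁) (Fin m × Fin n) ℝ} {Smat : Matrix (Fin M₁) (Fin s) ℝ}
    {Ud : Fin m → Matrix (Fin M₁) (Fin rs) ℝ} {k : Fin m} {α : Fin n → Fin s → ℝ}
    {β : Fin n → Fin rs → ℝ} (hUo : (Ud k)ᵀ * Ud k = 1) (hSU : Smatᵀ * Ud k = 0)
    (hcol : ∀ t, Dᵀ (k, t) = Smat *ᵥ α t + Ud k *ᵥ β t) {c : Fin M₁ → ℝ}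
    (hc : ∀ a, Smat *ᵥ a ⬝ᵥ c = 0) {p : ℝ} (hp : 0 < p) :
    ∑ t, |Dᵀ (k, t) ⬝ᵥ c| ^ p ≤ enorm c ^ p * Ddotmax D Ud p := by
  have hUS : (Ud k)ᵀ * Smat = 0 := by simpa using congrArg transpose hSU
  have hβ : ∀ t, (Ud k)ᵀ *ᵥ Dᵀ (k, t) = β t := fun t => by
    rw [hcol, mulVec_add, mulVec_mulVec, mulVec_mulVec, hUS, hUo, zero_mulVec, one_mulVec,
      zero_add]
  have hcluster : ∀ t, Dᵀ (k, t) ⬝ᵥ c = (Ud k)ᵀ *ᵥ c ⬝ᵥ (Ud k)ᵀ *ᵥ Dᵀ (k, t) := fun t => by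
    rw [hβ, hcol, add_dotProduct, hc, zero_add, dotProduct_comm, dotProduct_mulVec,
      ← mulVec_transpose]
  calc ∑ t, |Dᵀ (k, t) ⬝ᵥ c| ^ p
      = ∑ t, |(Ud k)ᵀ *ᵥ c ⬝ᵥ (Ud k)ᵀ *ᵥ Dᵀ (k, t)| ^ p := by simp only [hcluster]
    _ ≤ enorm ((Ud k)ᵀ *ᵥ c) ^ p * Ddotmax D Ud p :=
      sum_abs_dotProduct_rpow_le hp (fun _ hu => le_Ddotmax D Ud hp.le k hu) _
    _ ≤ enorm c ^ p * Ddotmax D Ud p := mul_le_mul_of_nonneg_right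
      (Real.rpow_le_rpow (enorm_nonneg _) (enorm_transpose_mulVec_le hUo c) hp.le)
      (Ddotmax_nonneg D Ud p)

theorem statement13_general (M₁ m n r s : ℕ) (hm : 1 < m)
    (D : Matrix (Fin M₁) (Fin m × Fin n) ℝ)
    (Smat : Matrix (Fin M₁) (Fin s) ℝ)
    (Ud : Fin m → Matrix (Fin M₁) (Fin (r - s)) ℝ)
    (α : Fin m × Fin n → Fin s → ℝ) (β : Fin m × Fin n → Fin (r - s) → ℝ)
    (hUo : ∀ j, (Ud j)ᵀ * Ud j = 1)
    (hSU : ∀ j, Smatᵀ * Ud j = 0)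
    (hcol : ∀ i : Fin m × Fin n, Dᵀ i = Smat.mulVec (α i) + (Ud i.1).mulVec (β i))
    (dP : Fin m → ℕ)
    (P : (i : Fin m) → Matrix (Fin M₁) (Fin (dP i)) ℝ)
    (hPo : ∀ i, (P i)ᵀ * P i = 1)
    (hPspan : ∀ i, colSpan (P i) =
      ⨆ j : { j : Fin m // j ≠ i }, (colSpan Smat ⊔ colSpan (Ud j.1)))
    (Uv : Fin m → Matrix (Fin M₁) (Fin (r - s)) ℝ)
    (hUvo : ∀ i, (Uv i)ᵀ * Uv i = 1)
    (hUvspan : ∀ i, colSpan (Uv i) =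
      Submodule.map (Matrix.mulVecLin (1 - P i * (P i)ᵀ)) (colSpan Smat ⊔ colSpan (Ud i)))
    (i : Fin m × Fin n)
    (hne : ((Uv i.1)ᵀ * Ud i.1).mulVec (β i) ≠ 0) :
    dotProduct ((enorm (((Uv i.1)ᵀ * Ud i.1).mulVec (β i)) ^ 2)⁻¹ •
        (Uv i.1 * (Uv i.1)ᵀ).mulVec (Dᵀ i)) (Dᵀ i) = 1 ∧
    (∀ j : Fin m × Fin n, j.1 ≠ i.1 →
      dotProduct (Dᵀ j) ((enorm (((Uv i.1)ᵀ * Ud i.1).mulVec (β i)) ^ 2)⁻¹ •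
        (Uv i.1 * (Uv i.1)ᵀ).mulVec (Dᵀ i)) = 0) ∧
    ∀ p : ℝ, 1 ≤ p →
      ∑ t : Fin n, |dotProduct (Dᵀ (i.1, t))
          ((enorm (((Uv i.1)ᵀ * Ud i.1).mulVec (β i)) ^ 2)⁻¹ •
            (Uv i.1 * (Uv i.1)ᵀ).mulVec (Dᵀ i))| ^ p
        ≤ Ddotmax D Ud p / enorm (((Uv i.1)ᵀ * Ud i.1).mulVec (β i)) ^ p := by
  set k := i.1
  set v := ((Uv k)ᵀ * Ud k) *ᵥ β i
  set c := (enorm v ^ 2)⁻¹ • (Uv k * (Uv k)ᵀ) *ᵥ Dᵀ i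
  have hcover : ∀ j ≠ k, colSpan Smat ⊔ colSpan (Ud j) ≤ colSpan (P k) := fun j hj =>
    (hPspan k).symm ▸
      le_iSup (fun j' : {j' // j' ≠ k} => colSpan Smat ⊔ colSpan (Ud j'.1)) ⟨j, hj⟩
  have hS : colSpan Smat ≤ colSpan (P k) := by
    obtain ⟨j, hj⟩ := Fintype.exists_ne_of_one_lt_card (by simpa using hm) k
    exact le_sup_left.trans (hcover j hj)
  have hker : ∀ x ∈ colSpan (P k), (Uv k)ᵀ *ᵥ x = 0 := fun _ =>
    transpose_mulVec_eq_zero_of_colSpan_le_map (hPo k) (hUvspan k).le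
  have hVS : ∀ a, (Uv k)ᵀ *ᵥ Smat *ᵥ a = 0 := fun a => hker _ (hS (mulVec_mem_colSpan _ _))
  have hVd : (Uv k)ᵀ *ᵥ Dᵀ i = v := by
    rw [hcol i, mulVec_add, hVS, zero_add, mulVec_mulVec]
  have hc : ∀ x, x ⬝ᵥ c = (enorm v ^ 2)⁻¹ * ((Uv k)ᵀ *ᵥ x ⬝ᵥ v) := by
    intro x
    rw [dotProduct_smul, ← mulVec_mulVec, dotProduct_mulVec, ← mulVec_transpose, hVd, smul_eq_mul]
  refine ⟨?_, fun j hj => ?_, fun p hp => ?_⟩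
  · rw [dotProduct_comm, hc, hVd, ← enorm_sq, inv_mul_cancel₀ (pow_ne_zero 2 (enorm_pos hne).ne')]
  · have hj : Dᵀ j ∈ colSpan (P k) := hcover j.1 hj (hcol j ▸ add_mem
      (Submodule.mem_sup_left (mulVec_mem_colSpan _ _))
      (Submodule.mem_sup_right (mulVec_mem_colSpan _ _)))
    rw [hc, hker _ hj, zero_dotProduct, mul_zero]
  · have hnorm : enorm c = (enorm v)⁻¹ := by
      rw [enorm_smul, ← mulVec_mulVec, enorm_mulVec_of_transpose_mul_self (hUvo k), hVd,
        abs_of_nonneg (by positivity), sq, mul_inv, mul_assoc,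
        inv_mul_cancel₀ (enorm_pos hne).ne', mul_one]
    calc ∑ t, |Dᵀ (k, t) ⬝ᵥ c| ^ p ≤ enorm c ^ p * Ddotmax D Ud p :=
          sum_abs_dotProduct_rpow_le_Ddotmax (hUo k) (hSU k) (fun t => hcol (k, t))
            (fun a => by rw [hc, hVS, zero_dotProduct, mul_zero]) (zero_lt_one.trans_le hp)
      _ = Ddotmax D Ud p / enorm v ^ p := by
        rw [hnorm, Real.inv_rpow (enorm_nonneg _), inv_mul_eq_div]

/-- properties of the direction `d⃗ᵢ = U⃗_{kᵢ}U⃗_{kᵢ}ᵀ dᵢ / ‖U⃗_{kᵢ}ᵀU̇_{kᵢ}βᵢ‖₂²`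
under the innovation assumption. -/
theorem statement13 (M₁ m n r s : ℕ) (hm : 1 < m) (hn : 0 < n) (hsr : s ≤ r)
    (D : Matrix (Fin M₁) (Fin m × Fin n) ℝ)
    (Smat : Matrix (Fin M₁) (Fin s) ℝ)
    (Ud : Fin m → Matrix (Fin M₁) (Fin (r - s)) ℝ)
    (α : Fin m × Fin n → Fin s → ℝ) (β : Fin m × Fin n → Fin (r - s) → ℝ)
    (hSo : Smatᵀ * Smat = 1)
    (hUo : ∀ j, (Ud j)ᵀ * Ud j = 1)
    (hSU : ∀ j, Smatᵀ * Ud j = 0)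
    (hnsub : ∀ i j : Fin m, i ≠ j →
      ¬ (colSpan Smat ⊔ colSpan (Ud i) ≤ colSpan Smat ⊔ colSpan (Ud j)))
    (hcap : ∀ i j : Fin m, i ≠ j →
      (colSpan Smat ⊔ colSpan (Ud i)) ⊓ (colSpan Smat ⊔ colSpan (Ud j)) = colSpan Smat)
    (hcol : ∀ i : Fin m × Fin n, Dᵀ i = Smat.mulVec (α i) + (Ud i.1).mulVec (β i))
    (dP : Fin m → ℕ)
    (P : (i : Fin m) → Matrix (Fin M₁) (Fin (dP i)) ℝ)
    (hPo : ∀ i, (P i)ᵀ * P i = 1)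
    (hPspan : ∀ i, colSpan (P i) =
      ⨆ j : { j : Fin m // j ≠ i }, (colSpan Smat ⊔ colSpan (Ud j.1)))
    (hA3 : ∀ i, colSpan (Ud i) ⊓ colSpan (P i) = ⊥)
    (Uv : Fin m → Matrix (Fin M₁) (Fin (r - s)) ℝ)
    (hUvo : ∀ i, (Uv i)ᵀ * Uv i = 1)
    (hUvspan : ∀ i, colSpan (Uv i) =
      Submodule.map (Matrix.mulVecLin (1 - P i * (P i)ᵀ)) (colSpan Smat ⊔ colSpan (Ud i)))
    (i : Fin m × Fin n)
    (hne : ((Uv i.1)ᵀ * Ud i.1).mulVec (β i) ≠ 0) :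
    dotProduct ((enorm (((Uv i.1)ᵀ * Ud i.1).mulVec (β i)) ^ 2)⁻¹ •
        (Uv i.1 * (Uv i.1)ᵀ).mulVec (Dᵀ i)) (Dᵀ i) = 1 ∧
    (∀ j : Fin m × Fin n, j.1 ≠ i.1 →
      dotProduct (Dᵀ j) ((enorm (((Uv i.1)ᵀ * Ud i.1).mulVec (β i)) ^ 2)⁻¹ •
        (Uv i.1 * (Uv i.1)ᵀ).mulVec (Dᵀ i)) = 0) ∧
    ∀ p : ℝ, 1 ≤ p →
      ∑ t : Fin n, |dotProduct (Dᵀ (i.1, t))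
          ((enorm (((Uv i.1)ᵀ * Ud i.1).mulVec (β i)) ^ 2)⁻¹ •
            (Uv i.1 * (Uv i.1)ᵀ).mulVec (Dᵀ i))| ^ p
        ≤ Ddotmax D Ud p / enorm (((Uv i.1)ᵀ * Ud i.1).mulVec (β i)) ^ p :=
  statement13_general M₁ m n r s hm D Smat Ud α β hUo hSU hcol dP P hPo hPspan Uv hUvo hUvspan i hne

end Paper
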